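/- arXiv:0903.4045 — 5 statements merged into one kernel-verified Lean document; each statement's English description precedes it below -/
import Mathlib

section
/- Let a group G act by unitary operators on a complex Hilbert space V and let u : G → V be a 1-cocycle. For t ∈ G let p_t denote the orthogonal projection onto the subspace V^t = {x ∈ V : t·x = x} of t-fixed vectors, and set s_t = p_t(u(t)). Then for all φ, t ∈ G one has s_{φ t φ^{-1}} = φ·s_t. -/
/-!
`ρ φ` carries `t`-fixed vectors onto `φ t φ⁻¹`-fixed vectors, and the cocycle identity gives
`u (φ t φ⁻¹) = ρ φ (u t) + (u φ - ρ (φ t φ⁻¹) (u φ))`. The coboundary term `u φ - ρ (φ t φ⁻¹) (u φ)`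
is orthogonal to the `φ t φ⁻¹`-fixed vectors, and `ρ φ` is unitary, so `ρ φ (s t)` satisfies the
characterization of the projection of `u (φ t φ⁻¹)`; the projection is unique.
-/

open scoped InnerProductSpace

section Projection

variable {𝕜 E : Type*} [RCLike 𝕜] [NormedAddCommGroup E] [InnerProductSpace 𝕜 E]

theorem Submodule.eq_of_inner_sub_eq_zero (K : Submodule 𝕜 E) {x v w : E} (hv : v ∈ K)
    (hw : w ∈ K) (hvx : ∀ y ∈ K, ⟪x - v, y⟫_𝕜 = 0) (hwx : ∀ y ∈ K, ⟪x - w, y⟫_𝕜 = 0) :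
    v = w := by
  have hvw : v - w ∈ K := K.sub_mem hv hw
  have : ⟪v - w, v - w⟫_𝕜 = 0 := by
    calc ⟪v - w, v - w⟫_𝕜 = ⟪x - w, v - w⟫_𝕜 - ⟪x - v, v - w⟫_𝕜 := by
          rw [← inner_sub_left, sub_sub_sub_cancel_left]
      _ = 0 := by rw [hwx _ hvw, hvx _ hvw, sub_zero]
  exact sub_eq_zero.mp (inner_self_eq_zero.mp this)

theorem LinearIsometryEquiv.inner_sub_apply_eq_zero_of_apply_eq (U : E ≃ₗᵢ[𝕜] E) (x : E)
    {y : E} (hy : U y = y) : ⟪x - U x, y⟫_𝕜 = 0 := by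
  rw [inner_sub_left]
  nth_rewrite 2 [← hy]
  rw [U.inner_map_map, sub_self]

end Projection

theorem cocycle_apply_conj {G V : Type*} [Group G] [AddCommGroup V] (ρ : G → V → V) (u : G → V)
    (hu : ∀ a b : G, u (a * b) = u a + ρ a (u b)) (φ t : G) :
    u (φ * t * φ⁻¹) = ρ φ (u t) + (u φ - ρ (φ * t * φ⁻¹) (u φ)) := by
  have h := hu (φ * t * φ⁻¹) φ
  rw [inv_mul_cancel_right, hu φ t] at h
  rw [← add_sub_assoc, add_comm (ρ φ _), h, add_sub_cancel_right]

section Unitary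

variable {G 𝕜 E : Type*} [Group G] [RCLike 𝕜] [NormedAddCommGroup E] [InnerProductSpace 𝕜 E]
  (ρ : G →* (E ≃ₗᵢ[𝕜] E))

theorem MonoidHom.apply_conj_apply (φ t : G) (x : E) :
    ρ (φ * t * φ⁻¹) (ρ φ x) = ρ φ (ρ t x) := by
  simp [LinearIsometryEquiv.coe_mul]

theorem MonoidHom.apply_conj_eq_self_iff (φ t : G) (x : E) :
    ρ (φ * t * φ⁻¹) (ρ φ x) = ρ φ x ↔ ρ t x = x := by
  rw [ρ.apply_conj_apply, (ρ φ).injective.eq_iff]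

end Unitary

theorem s_natural_general
    {G V : Type*} [Group G]
    [NormedAddCommGroup V] [InnerProductSpace ℂ V]
    (ρ : G →* (V ≃ₗᵢ[ℂ] V)) (p : G → V → V)
    (hp_mem : ∀ (t : G) (x : V), ρ t (p t x) = p t x)
    (hp_orth : ∀ (t : G) (x y : V), ρ t y = y →
      (inner ℂ (x - p t x) y : ℂ) = 0)
    (u : G → V) (hu : ∀ a b : G, u (a * b) = u a + ρ a (u b))
    (φ t : G) :
    p (φ * t * φ⁻¹) (u (φ * t * φ⁻¹)) = ρ φ (p t (u t)) := by
  set t' := φ * t * φ⁻¹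
  let K := LinearMap.eqLocus (ρ t').toLinearEquiv.toLinearMap LinearMap.id
  refine K.eq_of_inner_sub_eq_zero (x := u t') (hp_mem t' _) ?_ (fun y ↦ hp_orth t' _ y) ?_
  · exact (ρ.apply_conj_eq_self_iff φ t _).mpr (hp_mem t _)
  · intro y hy
    obtain ⟨y, rfl⟩ := (ρ φ).surjective y
    have hy : ρ t y = y := (ρ.apply_conj_eq_self_iff φ t y).mp hy
    rw [cocycle_apply_conj (ρ ·) u hu, add_sub_right_comm, ← map_sub, inner_add_left,
      (ρ φ).inner_map_map, hp_orth t _ y hy,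
      (ρ t').inner_sub_apply_eq_zero_of_apply_eq _ (ρ.apply_conj_eq_self_iff φ t y |>.mpr hy),
      add_zero]

/-- Let a group `G` act by unitary operators on a complex Hilbert
space `V` (via `ρ : G →* (V ≃ₗᵢ[ℂ] V)`) and let `u : G → V` be a 1-cocycle.
For `t ∈ G` let `p t` be the orthogonal projection onto the subspace `V^t` of
`t`-fixed vectors (characterized by: `p t x` is `t`-fixed and `x - p t x` is
orthogonal to every `t`-fixed vector), and set `s t = p t (u t)`.  Then for all
`φ, t ∈ G` one has `s (φ t φ⁻¹) = φ • s t`. -/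
theorem s_natural
    {G V : Type*} [Group G]
    [NormedAddCommGroup V] [InnerProductSpace ℂ V] [CompleteSpace V]
    (ρ : G →* (V ≃ₗᵢ[ℂ] V)) (p : G → V → V)
    (hp_mem : ∀ (t : G) (x : V), ρ t (p t x) = p t x)
    (hp_orth : ∀ (t : G) (x y : V), ρ t y = y →
      (inner ℂ (x - p t x) y : ℂ) = 0)
    (u : G → V) (hu : ∀ a b : G, u (a * b) = u a + ρ a (u b))
    (φ t : G) :
    p (φ * t * φ⁻¹) (u (φ * t * φ⁻¹)) = ρ φ (p t (u t)) :=
  s_natural_general ρ p hp_mem hp_orth u hu φ t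
end

section
/- Let a group G act by unitary operators on a complex Hilbert space V and let u : G → V be a 1-cocycle. Let t ∈ G and let φ ∈ G be any element commuting with t. Then φ·s_t = s_t, where s_t = p_t(u(t)) and p_t is the orthogonal projection onto the subspace of t-fixed vectors. -/
/-! Because `φ` commutes with `t`, the unitary `ρ φ` preserves the space `K` of `t`-fixed
vectors and its orthogonal complement (it maps them onto those of `φ t φ⁻¹`), so it commutes
with the projection `p t`; thus `ρ φ (s t) = p t (ρ φ (u t))`. The cocycle identity for
`φ t = t φ` gives `ρ φ (u t) - u t = ρ t (u φ) - u φ`, and vectors of the form `ρ t y - y` are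
orthogonal to `K`, so `ρ φ (u t)` and `u t` have the same projection `s t`. -/

open Submodule

theorem Submodule.eq_of_sub_mem_orthogonal_of_sub_mem_orthogonal {𝕜 E : Type*} [RCLike 𝕜]
    [NormedAddCommGroup E] [InnerProductSpace 𝕜 E] {K : Submodule 𝕜 E} {x z₁ z₂ : E}
    (hz₁ : z₁ ∈ K) (hz₂ : z₂ ∈ K) (hx₁ : x - z₁ ∈ Kᗮ) (hx₂ : x - z₂ ∈ Kᗮ) :
    z₁ = z₂ := by
  have hK : z₂ - z₁ ∈ K := K.sub_mem hz₂ hz₁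
  have hKperp : z₂ - z₁ ∈ Kᗮ := by simpa using Kᗮ.sub_mem hx₁ hx₂
  exact (sub_eq_zero.mp (disjoint_def.mp K.orthogonal_disjoint _ hK hKperp)).symm

namespace MonoidHom

variable {G 𝕜 V : Type*} [Group G] [RCLike 𝕜] [NormedAddCommGroup V] [InnerProductSpace 𝕜 V]
  (ρ : G →* (V ≃ₗᵢ[𝕜] V))

def fixedSubspace (g : G) : Submodule 𝕜 V :=
  LinearMap.eqLocus (ρ g).toLinearEquiv.toLinearMap LinearMap.id

theorem mem_fixedSubspace {g : G} {x : V} : x ∈ ρ.fixedSubspace g ↔ ρ g x = x :=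
  Iff.rfl

theorem map_fixedSubspace (g t : G) :
    (ρ.fixedSubspace t).map (ρ g).toLinearEquiv.toLinearMap = ρ.fixedSubspace (g * t * g⁻¹) := by
  ext y
  rw [map_equiv_eq_comap_symm, mem_comap, mem_fixedSubspace, mem_fixedSubspace,
    LinearEquiv.coe_coe, LinearIsometryEquiv.coe_symm_toLinearEquiv, map_mul, map_mul,
    LinearIsometryEquiv.coe_mul, LinearIsometryEquiv.coe_mul, map_inv, LinearIsometryEquiv.coe_inv]
  exact (ρ g).eq_symm_apply

theorem apply_sub_self_mem_orthogonal_fixedSubspace (t : G) (y : V) :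
    ρ t y - y ∈ (ρ.fixedSubspace t)ᗮ := by
  rw [mem_orthogonal']
  intro x hx
  rw [inner_sub_left, ← (ρ t).inner_map_map y x, ρ.mem_fixedSubspace.mp hx, sub_self]

theorem cocycle_apply_sub_self_eq_of_commute {u : G → V}
    (hu : ∀ a b : G, u (a * b) = u a + ρ a (u b)) {φ t : G} (hcomm : Commute φ t) :
    ρ φ (u t) - u t = ρ t (u φ) - u φ := by
  have h := hu φ t
  rw [hcomm.eq, hu t φ] at h
  rw [sub_eq_sub_iff_add_eq_add, add_comm, ← h, add_comm]

theorem apply_mem_fixedSubspace_of_commute {φ t : G} (hcomm : Commute φ t) {x : V}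
    (hx : x ∈ ρ.fixedSubspace t) : ρ φ x ∈ ρ.fixedSubspace t := by
  rw [← mul_inv_cancel_right t φ, ← hcomm.eq, ← map_fixedSubspace]
  exact mem_map_of_mem hx

theorem apply_mem_orthogonal_fixedSubspace_of_commute {φ t : G} (hcomm : Commute φ t) {x : V}
    (hx : x ∈ (ρ.fixedSubspace t)ᗮ) : ρ φ x ∈ (ρ.fixedSubspace t)ᗮ := by
  rw [← mul_inv_cancel_right t φ, ← hcomm.eq, ← map_fixedSubspace, ← map_orthogonal_equiv]
  exact mem_map_of_mem hx

end MonoidHom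

open MonoidHom in
theorem s_fixed_by_commuting_general
    {G V : Type*} [Group G]
    [NormedAddCommGroup V] [InnerProductSpace ℂ V]
    (ρ : G →* (V ≃ₗᵢ[ℂ] V)) (p : G → V → V)
    (hp_mem : ∀ (t : G) (x : V), ρ t (p t x) = p t x)
    (hp_orth : ∀ (t : G) (x y : V), ρ t y = y →
      (inner ℂ (x - p t x) y : ℂ) = 0)
    (u : G → V) (hu : ∀ a b : G, u (a * b) = u a + ρ a (u b))
    (t φ : G) (hcomm : φ * t = t * φ) :
    ρ φ (p t (u t)) = p t (u t) := by
  set K := ρ.fixedSubspace t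
  have hp_mem' (x : V) : p t x ∈ K := hp_mem t x
  have hp_orth' (x : V) : x - p t x ∈ Kᗮ := (mem_orthogonal' _ _).mpr (hp_orth t x)
  have hmap_mem : ρ φ (p t (u t)) ∈ K :=
    apply_mem_fixedSubspace_of_commute ρ hcomm (hp_mem' _)
  have hmap_orth : ρ φ (u t) - ρ φ (p t (u t)) ∈ Kᗮ := by
    rw [← map_sub]
    exact apply_mem_orthogonal_fixedSubspace_of_commute ρ hcomm (hp_orth' _)
  have hshift_orth : ρ φ (u t) - p t (u t) ∈ Kᗮ := by
    rw [← sub_add_sub_cancel _ (u t), cocycle_apply_sub_self_eq_of_commute ρ hu hcomm]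
    exact add_mem (apply_sub_self_mem_orthogonal_fixedSubspace ρ t _) (hp_orth' _)
  exact eq_of_sub_mem_orthogonal_of_sub_mem_orthogonal hmap_mem (hp_mem' _) hmap_orth hshift_orth

/-- Let a group `G` act by unitary operators on a complex Hilbert
space `V` (via `ρ : G →* (V ≃ₗᵢ[ℂ] V)`) and let `u : G → V` be a 1-cocycle.
Let `t ∈ G` and let `φ ∈ G` commute with `t`.  Then `φ • s t = s t`, where
`s t = p t (u t)` and `p t` is the orthogonal projection onto the subspace of
`t`-fixed vectors (characterized by: `p t x` is `t`-fixed and `x - p t x` is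
orthogonal to every `t`-fixed vector). -/
theorem s_fixed_by_commuting
    {G V : Type*} [Group G]
    [NormedAddCommGroup V] [InnerProductSpace ℂ V] [CompleteSpace V]
    (ρ : G →* (V ≃ₗᵢ[ℂ] V)) (p : G → V → V)
    (hp_mem : ∀ (t : G) (x : V), ρ t (p t x) = p t x)
    (hp_orth : ∀ (t : G) (x y : V), ρ t y = y →
      (inner ℂ (x - p t x) y : ℂ) = 0)
    (u : G → V) (hu : ∀ a b : G, u (a * b) = u a + ρ a (u b))
    (t φ : G) (hcomm : φ * t = t * φ) :
    ρ φ (p t (u t)) = p t (u t) :=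
  s_fixed_by_commuting_general ρ p hp_mem hp_orth u hu t φ hcomm
end

section
/- Let a group G act by unitary operators on a complex Hilbert space V and let u : G → V be a 1-cocycle; for t ∈ G set s_t = p_t(u(t)), where p_t is the orthogonal projection onto the t-fixed vectors. Suppose a, b, c, d, e, h ∈ G satisfy the relation (abc)^4 = de, that each of a, b, c, d, e commutes with h, and that there is a constant κ ∈ ℂ with ⟨s_x, s_h⟩ = κ for every x ∈ {a, b, c, d, e}. Then κ = 0. -/
/-!
Write `s = s_h`. The cocycle identity `u (x h) = u (h x)` shows that every `x` commuting with `h`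
maps `s` to a vector with the two properties characterizing the projection of `u h` onto the
`h`-fixed vectors, so `x` fixes `s`. On the centralizer of `h` the functional
`g ↦ ⟪u g, s⟫` is therefore additive, and there it agrees with `g ↦ ⟪s_g, s⟫`. Evaluating it on
both sides of `(a b c)^4 = d e` gives `12 κ = 2 κ`.
-/

open scoped InnerProductSpace

section FixedVectors

variable {𝕜 V : Type*} [RCLike 𝕜] [NormedAddCommGroup V] [InnerProductSpace 𝕜 V]

theorem eq_of_fixed_of_inner_sub_fixed_eq_zero {F : Type*} [FunLike F V V]
    [LinearMapClass F 𝕜 V V] {f : F} {x z z' : V} (hz : f z = z) (hz' : f z' = z')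
    (h : ∀ y, f y = y → ⟪x - z, y⟫_𝕜 = 0) (h' : ∀ y, f y = y → ⟪x - z', y⟫_𝕜 = 0) :
    z = z' := by
  have hfix : f (z - z') = z - z' := by rw [map_sub, hz, hz']
  have hself : ⟪z - z', z - z'⟫_𝕜 = 0 :=
    calc ⟪z - z', z - z'⟫_𝕜 = ⟪(x - z') - (x - z), z - z'⟫_𝕜 := by
          rw [sub_sub_sub_cancel_left]
      _ = 0 := by rw [inner_sub_left, h' _ hfix, h _ hfix, sub_zero]
  exact sub_eq_zero.mp (inner_self_eq_zero.mp hself)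

theorem LinearIsometryEquiv.inner_map_left_of_fixed (f : V ≃ₗᵢ[𝕜] V) {y : V} (hy : f y = y)
    (v : V) : ⟪f v, y⟫_𝕜 = ⟪v, y⟫_𝕜 :=
  calc ⟪f v, y⟫_𝕜 = ⟪f v, f y⟫_𝕜 := by rw [hy]
    _ = ⟪v, y⟫_𝕜 := f.inner_map_map v y

end FixedVectors

section Cocycle

variable {G 𝕜 V : Type*} [Group G] [RCLike 𝕜] [NormedAddCommGroup V] [InnerProductSpace 𝕜 V]
  {ρ : G →* (V ≃ₗᵢ[𝕜] V)}

theorem apply_fixed_of_commute {x h : G} (hxh : Commute x h) {y : V} (hy : ρ h y = y) :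
    ρ h (ρ x y) = ρ x y := by
  have hmul : ∀ g k : G, ρ (g * k) y = ρ g (ρ k y) := fun g k => by rw [map_mul]; rfl
  rw [← hmul, ← hxh.eq, hmul, hy]

theorem inner_proj_left_of_fixed {p : G → V → V}
    (hp_orth : ∀ (t : G) (x y : V), ρ t y = y → ⟪x - p t x, y⟫_𝕜 = 0)
    {t : G} {y : V} (hy : ρ t y = y) (x : V) : ⟪p t x, y⟫_𝕜 = ⟪x, y⟫_𝕜 :=
  (sub_eq_zero.mp (by rw [← inner_sub_left]; exact hp_orth t x y hy)).symm

theorem fixed_of_commute {p : G → V → V} (hp_mem : ∀ (t : G) (x : V), ρ t (p t x) = p t x)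
    (hp_orth : ∀ (t : G) (x y : V), ρ t y = y → ⟪x - p t x, y⟫_𝕜 = 0)
    {u : G → V} (hu : ∀ a b : G, u (a * b) = u a + ρ a (u b)) {x h : G} (hxh : Commute x h) :
    ρ x (p h (u h)) = p h (u h) := by
  set s := p h (u h)
  have hcoc : ρ x (u h) = u h + (ρ h (u x) - u x) := by
    have := hu x h
    rw [hxh.eq, hu h x] at this
    rw [← add_sub_assoc, this, add_sub_cancel_left]
  have horth : ∀ y, ρ h y = y → ⟪u h - ρ x s, y⟫_𝕜 = 0 := by
    intro y hy
    have hy' : ρ h ((ρ x).symm y) = (ρ x).symm y := by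
      simpa [map_inv, LinearIsometryEquiv.inv_def] using apply_fixed_of_commute hxh.inv_left hy
    calc ⟪u h - ρ x s, y⟫_𝕜 = ⟪u h, y⟫_𝕜 - ⟪s, (ρ x).symm y⟫_𝕜 := by
          rw [inner_sub_left, LinearIsometryEquiv.inner_map_eq_flip]
      _ = ⟪u h, y⟫_𝕜 - ⟪ρ x (u h), y⟫_𝕜 := by
          rw [inner_proj_left_of_fixed hp_orth hy', LinearIsometryEquiv.inner_map_eq_flip]
      _ = 0 := by
          rw [hcoc, inner_add_left, inner_sub_left, (ρ h).inner_map_left_of_fixed hy]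
          ring
  exact eq_of_fixed_of_inner_sub_fixed_eq_zero (apply_fixed_of_commute hxh (hp_mem h (u h)))
    (hp_mem h (u h)) horth (hp_orth h (u h))

theorem cocycle_one {u : G → V} (hu : ∀ a b : G, u (a * b) = u a + ρ a (u b)) : u 1 = 0 := by
  simpa using hu 1 1

theorem inner_cocycle_mul_of_fixed {u : G → V} (hu : ∀ a b : G, u (a * b) = u a + ρ a (u b))
    {s : V} {g : G} (hg : ρ g s = s) (k : G) : ⟪u (g * k), s⟫_𝕜 = ⟪u g, s⟫_𝕜 + ⟪u k, s⟫_𝕜 := by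
  rw [hu, inner_add_left, (ρ g).inner_map_left_of_fixed hg]

theorem inner_cocycle_pow_of_fixed {u : G → V} (hu : ∀ a b : G, u (a * b) = u a + ρ a (u b))
    {s : V} {g : G} (hg : ρ g s = s) (n : ℕ) : ⟪u (g ^ n), s⟫_𝕜 = n * ⟪u g, s⟫_𝕜 := by
  induction n with
  | zero => simp [cocycle_one hu]
  | succ n ih => rw [pow_succ', inner_cocycle_mul_of_fixed hu hg, ih]; push_cast; ring

end Cocycle

theorem chain_relation_inner_eq_zero_general
    {G V : Type*} [Group G]
    [NormedAddCommGroup V] [InnerProductSpace ℂ V]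
    (ρ : G →* (V ≃ₗᵢ[ℂ] V)) (p : G → V → V)
    (hp_mem : ∀ (t : G) (x : V), ρ t (p t x) = p t x)
    (hp_orth : ∀ (t : G) (x y : V), ρ t y = y →
      (inner ℂ (x - p t x) y : ℂ) = 0)
    (u : G → V) (hu : ∀ a b : G, u (a * b) = u a + ρ a (u b))
    (a b c d e h : G)
    (hrel : (a * b * c) ^ 4 = d * e)
    (hcomm : ∀ x ∈ [a, b, c, d, e], x * h = h * x)
    (κ : ℂ)
    (hκ : ∀ x ∈ [a, b, c, d, e], (inner ℂ (p x (u x)) (p h (u h)) : ℂ) = κ) :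
    κ = 0 := by
  set s := p h (u h)
  have hfix : ∀ x, Commute x h → ρ x s = s := fun x hx => fixed_of_commute hp_mem hp_orth hu hx
  have hval : ∀ x ∈ [a, b, c, d, e], ⟪u x, s⟫_ℂ = κ := fun x hx => by
    rw [← inner_proj_left_of_fixed hp_orth (hfix x (hcomm x hx)), hκ x hx]
  have ha : Commute a h := hcomm a (by simp)
  have hb : Commute b h := hcomm b (by simp)
  have hc : Commute c h := hcomm c (by simp)
  have hd : Commute d h := hcomm d (by simp)
  have hlhs : ⟪u ((a * b * c) ^ 4), s⟫_ℂ = 12 * κ := by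
    rw [inner_cocycle_pow_of_fixed hu (hfix _ ((ha.mul_left hb).mul_left hc)),
      inner_cocycle_mul_of_fixed hu (hfix _ (ha.mul_left hb)),
      inner_cocycle_mul_of_fixed hu (hfix a ha), hval a (by simp), hval b (by simp),
      hval c (by simp)]
    ring
  have hrhs : ⟪u (d * e), s⟫_ℂ = 2 * κ := by
    rw [inner_cocycle_mul_of_fixed hu (hfix d hd), hval d (by simp), hval e (by simp)]
    ring
  have h12 : (12 : ℂ) * κ = 2 * κ := by rw [← hlhs, ← hrhs, hrel]
  linear_combination h12 / 10

/-- abstract two-holed torus / chain relation computation: Let a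
group `G` act by unitary operators on a complex Hilbert space `V` (via
`ρ : G →* (V ≃ₗᵢ[ℂ] V)`) and let `u : G → V` be a 1-cocycle; for `t ∈ G` set
`s t = p t (u t)`, where `p t` is the orthogonal projection onto the `t`-fixed
vectors (characterized by: `p t x` is `t`-fixed and `x - p t x` is orthogonal
to every `t`-fixed vector).  Suppose `a, b, c, d, e, h ∈ G` satisfy
`(a b c)^4 = d e`, that each of `a, b, c, d, e` commutes with `h`, and that
there is `κ ∈ ℂ` with `⟨s x, s h⟩ = κ` for every `x ∈ {a, b, c, d, e}`.
Then `κ = 0`. -/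
theorem chain_relation_inner_eq_zero
    {G V : Type*} [Group G]
    [NormedAddCommGroup V] [InnerProductSpace ℂ V] [CompleteSpace V]
    (ρ : G →* (V ≃ₗᵢ[ℂ] V)) (p : G → V → V)
    (hp_mem : ∀ (t : G) (x : V), ρ t (p t x) = p t x)
    (hp_orth : ∀ (t : G) (x y : V), ρ t y = y →
      (inner ℂ (x - p t x) y : ℂ) = 0)
    (u : G → V) (hu : ∀ a b : G, u (a * b) = u a + ρ a (u b))
    (a b c d e h : G)
    (hrel : (a * b * c) ^ 4 = d * e)
    (hcomm : ∀ x ∈ [a, b, c, d, e], x * h = h * x)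
    (κ : ℂ)
    (hκ : ∀ x ∈ [a, b, c, d, e], (inner ℂ (p x (u x)) (p h (u h)) : ℂ) = κ) :
    κ = 0 :=
  chain_relation_inner_eq_zero_general ρ p hp_mem hp_orth u hu a b c d e h hrel hcomm κ hκ
end

section
/- Let a group G act by unitary operators on a complex Hilbert space V and let u : G → V be a 1-cocycle; for t ∈ G set s_t = p_t(u(t)), where p_t is the orthogonal projection onto the t-fixed vectors. Suppose t ∈ G can be written as a product t = t_1^{ε_1} t_2^{ε_2} ⋯ t_n^{ε_n} with signs ε_j ∈ {1, −1}, where each t_j commutes with t and s_{t_j} = 0 for every j = 1, …, n. Then s_t = 0. -/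
/-!
Write `s = p t (u t)`. Every `g` commuting with `t` fixes `s`, in particular every `tⱼ`. On the
stabilizer of `s` the pairing `g ↦ ⟪u g, s⟫` is additive, and it vanishes at `tⱼ` because
`⟪u tⱼ, s⟫ = ⟪p tⱼ (u tⱼ), s⟫ = 0`. Hence it vanishes at the product `t`, and
`⟪s, s⟫ = ⟪u t, s⟫ = 0`.
-/

open scoped InnerProductSpace

section Cocycle

variable {R G V : Type*} [Semiring R] [Group G] [SeminormedAddCommGroup V] [Module R V]
  (ρ : G →* (V ≃ₗᵢ[R] V))

theorem MonoidHom.map_mul_apply (a b : G) (x : V) : ρ (a * b) x = ρ a (ρ b x) := by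
  rw [map_mul]
  rfl

theorem MonoidHom.map_inv_apply_eq_self {a : G} {w : V} (hw : ρ a w = w) : ρ a⁻¹ w = w := by
  rw [map_inv]
  exact (ρ a).symm_apply_eq.mpr hw.symm

def IsCocycle (u : G → V) : Prop :=
  ∀ a b, u (a * b) = u a + ρ a (u b)

namespace IsCocycle

variable {ρ} {u : G → V}

theorem map_one (hu : IsCocycle ρ u) : u 1 = 0 := by
  simpa [_root_.map_one] using hu 1 1

theorem map_inv (hu : IsCocycle ρ u) (a : G) : u a⁻¹ = -ρ a⁻¹ (u a) := by
  have h := hu a⁻¹ a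
  rw [inv_mul_cancel, hu.map_one] at h
  exact eq_neg_of_add_eq_zero_left h.symm

theorem apply_sub_eq_of_commute (hu : IsCocycle ρ u) {g t : G} (h : Commute g t) :
    ρ g (u t) - u t = ρ t (u g) - u g := by
  have := hu t g
  rw [← h.eq, hu g t] at this
  rw [sub_eq_sub_iff_add_eq_add, add_comm, this, add_comm]

end IsCocycle

end Cocycle

section InnerProduct

variable {𝕜 G V : Type*} [RCLike 𝕜] [Group G] [NormedAddCommGroup V] [InnerProductSpace 𝕜 V]

namespace LinearIsometryEquiv

theorem inner_map_left_of_map_eq_self (f : V ≃ₗᵢ[𝕜] V) {w : V} (hw : f w = w) (x : V) :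
    ⟪f x, w⟫_𝕜 = ⟪x, w⟫_𝕜 := by
  rw [← hw, inner_map_map, hw]

theorem eq_of_forall_fixed_inner_eq (f : V ≃ₗᵢ[𝕜] V) {y y' : V} (hy : f y = y) (hy' : f y' = y')
    (h : ∀ w, f w = w → ⟪y, w⟫_𝕜 = ⟪y', w⟫_𝕜) : y = y' := by
  have hfix : f (y - y') = y - y' := by rw [map_sub, hy, hy']
  rw [← sub_eq_zero, ← inner_self_eq_zero (𝕜 := 𝕜), inner_sub_left, h _ hfix, sub_self]

end LinearIsometryEquiv

variable {ρ : G →* (V ≃ₗᵢ[𝕜] V)}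

namespace IsCocycle

variable {u : G → V}

/-- On the stabilizer of `w`, the pairing `g ↦ ⟪u g, w⟫` is additive; this is its kernel. -/
def orthStabilizer (hu : IsCocycle ρ u) (w : V) : Subgroup G where
  carrier := {g | ρ g w = w ∧ ⟪u g, w⟫_𝕜 = 0}
  one_mem' := ⟨by rw [_root_.map_one]; rfl, by rw [hu.map_one, inner_zero_left]⟩
  mul_mem' := by
    rintro a b ⟨ha, hua⟩ ⟨hb, hub⟩
    refine ⟨by rw [ρ.map_mul_apply, hb, ha], ?_⟩
    rw [hu, inner_add_left, (ρ a).inner_map_left_of_map_eq_self ha, hua, hub, add_zero]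
  inv_mem' := by
    rintro a ⟨ha, hua⟩
    have ha' := ρ.map_inv_apply_eq_self ha
    refine ⟨ha', ?_⟩
    rw [hu.map_inv, inner_neg_left, (ρ a⁻¹).inner_map_left_of_map_eq_self ha', hua, neg_zero]

end IsCocycle

variable {p : G → V → V}

theorem inner_proj_left_of_apply_eq_self
    (hp_orth : ∀ (t : G) (x y : V), ρ t y = y → ⟪x - p t x, y⟫_𝕜 = 0)
    {t : G} {w : V} (hw : ρ t w = w) (x : V) : ⟪p t x, w⟫_𝕜 = ⟪x, w⟫_𝕜 :=
  (sub_eq_zero.mp (by rw [← inner_sub_left]; exact hp_orth t x w hw)).symm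

/-- Both sides are `t`-fixed and have the same inner products with `t`-fixed vectors, since
`ρ g (u t) - u t = ρ t (u g) - u g` is orthogonal to them. -/
theorem apply_proj_cocycle_eq_self_of_commute
    (hp_mem : ∀ (t : G) (x : V), ρ t (p t x) = p t x)
    (hp_orth : ∀ (t : G) (x y : V), ρ t y = y → ⟪x - p t x, y⟫_𝕜 = 0)
    {u : G → V} (hu : IsCocycle ρ u) {g t : G} (h : Commute g t) :
    ρ g (p t (u t)) = p t (u t) := by
  refine (ρ t).eq_of_forall_fixed_inner_eq ?_ (hp_mem t _) fun w hw => ?_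
  · rw [← ρ.map_mul_apply, ← h.eq, ρ.map_mul_apply, hp_mem]
  have hw' : ρ t (ρ g⁻¹ w) = ρ g⁻¹ w := by
    rw [← ρ.map_mul_apply, ← h.inv_left.eq, ρ.map_mul_apply, hw]
  have hcob : ⟪ρ g (u t), w⟫_𝕜 = ⟪u t, w⟫_𝕜 := by
    rw [← sub_eq_zero, ← inner_sub_left, hu.apply_sub_eq_of_commute h, inner_sub_left,
      (ρ t).inner_map_left_of_map_eq_self hw, sub_self]
  calc ⟪ρ g (p t (u t)), w⟫_𝕜 = ⟪p t (u t), ρ g⁻¹ w⟫_𝕜 := by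
        rw [(ρ g).inner_map_eq_flip, map_inv]; rfl
    _ = ⟪u t, ρ g⁻¹ w⟫_𝕜 := inner_proj_left_of_apply_eq_self hp_orth hw' _
    _ = ⟪ρ g (u t), w⟫_𝕜 := by rw [(ρ g).inner_map_eq_flip, map_inv]; rfl
    _ = ⟪p t (u t), w⟫_𝕜 := by rw [hcob, inner_proj_left_of_apply_eq_self hp_orth hw]

end InnerProduct

theorem s_eq_zero_of_product_general
    {G V : Type*} [Group G]
    [NormedAddCommGroup V] [InnerProductSpace ℂ V]
    (ρ : G →* (V ≃ₗᵢ[ℂ] V)) (p : G → V → V)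
    (hp_mem : ∀ (t : G) (x : V), ρ t (p t x) = p t x)
    (hp_orth : ∀ (t : G) (x y : V), ρ t y = y →
      (inner ℂ (x - p t x) y : ℂ) = 0)
    (u : G → V) (hu : ∀ a b : G, u (a * b) = u a + ρ a (u b))
    (t : G) (n : ℕ) (ts : Fin n → G) (εs : Fin n → ℤ)
    (hprod : t = (List.ofFn fun j : Fin n => ts j ^ εs j).prod)
    (hcomm : ∀ j : Fin n, ts j * t = t * ts j)
    (hs : ∀ j : Fin n, p (ts j) (u (ts j)) = 0) :
    p t (u t) = 0 := by
  have hu : IsCocycle ρ u := hu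
  have hfix (j : Fin n) : ρ (ts j) (p t (u t)) = p t (u t) :=
    apply_proj_cocycle_eq_self_of_commute hp_mem hp_orth hu (hcomm j)
  set S := hu.orthStabilizer (p t (u t))
  have hts (j : Fin n) : ts j ∈ S :=
    ⟨hfix j, by rw [← inner_proj_left_of_apply_eq_self hp_orth (hfix j), hs j, inner_zero_left]⟩
  have ht : t ∈ S := by
    rw [hprod]
    refine list_prod_mem fun g hg => ?_
    obtain ⟨j, rfl⟩ := List.mem_ofFn.mp hg
    exact zpow_mem (hts j) _
  rw [← inner_self_eq_zero (𝕜 := ℂ), inner_proj_left_of_apply_eq_self hp_orth (hp_mem t _)]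
  exact ht.2

/-- abstract reduction of separating twists to non-separating
ones: Let a group `G` act by unitary operators on a complex Hilbert space `V`
(via `ρ : G →* (V ≃ₗᵢ[ℂ] V)`) and let `u : G → V` be a 1-cocycle; for `t ∈ G`
set `s t = p t (u t)`, where `p t` is the orthogonal projection onto the
`t`-fixed vectors (characterized by: `p t x` is `t`-fixed and `x - p t x` is
orthogonal to every `t`-fixed vector).  Suppose `t ∈ G` can be written as a
product `t = t₁^{ε₁} ⋯ t_n^{ε_n}` with signs `ε_j = ±1`, where each `t_j`
commutes with `t` and `s t_j = 0` for every `j`.  Then `s t = 0`. -/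
theorem s_eq_zero_of_product
    {G V : Type*} [Group G]
    [NormedAddCommGroup V] [InnerProductSpace ℂ V] [CompleteSpace V]
    (ρ : G →* (V ≃ₗᵢ[ℂ] V)) (p : G → V → V)
    (hp_mem : ∀ (t : G) (x : V), ρ t (p t x) = p t x)
    (hp_orth : ∀ (t : G) (x y : V), ρ t y = y →
      (inner ℂ (x - p t x) y : ℂ) = 0)
    (u : G → V) (hu : ∀ a b : G, u (a * b) = u a + ρ a (u b))
    (t : G) (n : ℕ) (ts : Fin n → G) (εs : Fin n → ℤ)
    (hε : ∀ j : Fin n, εs j = 1 ∨ εs j = -1)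
    (hprod : t = (List.ofFn fun j : Fin n => ts j ^ εs j).prod)
    (hcomm : ∀ j : Fin n, ts j * t = t * ts j)
    (hs : ∀ j : Fin n, p (ts j) (u (ts j)) = 0) :
    p t (u t) = 0 :=
  s_eq_zero_of_product_general ρ p hp_mem hp_orth u hu t n ts εs hprod hcomm hs
end

section
/- Fix g ≥ 1 and let f : ℤ^{2g} → ℂ be square-summable (Σ_m |f(m)|² < ∞). Suppose that for each of the 4g shear maps T of ℤ^{2g} and for every k ∈ ℕ there is a constant C (depending on T and k) such that |m|^k · |f(m) − f(T(m))| ≤ C for all m ∈ ℤ^{2g}. Then f is rapidly decreasing away from zero: for every k ∈ ℕ there is a constant F_k such that |m|^k · |f(m)| ≤ F_k for all nonzero m ∈ ℤ^{2g}. -/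
/-- An element of `ℤ^{2g}` is encoded as `m : Fin g → ℤ × ℤ`, where
`(m j).1 = a_j` and `(m j).2 = b_j`.  Its norm is `|m| = Σ_j (|a_j| + |b_j|)`. -/
def homNorm {g : ℕ} (m : Fin g → ℤ × ℤ) : ℤ :=
  ∑ j : Fin g, (|(m j).1| + |(m j).2|)

/-- The shear map `S_{j,ε}`: replaces `b_j` by `b_j + ε * a_j`, leaving all
other coordinates unchanged. -/
def shearS {g : ℕ} (j : Fin g) (ε : ℤ) (m : Fin g → ℤ × ℤ) : Fin g → ℤ × ℤ :=
  Function.update m j ((m j).1, (m j).2 + ε * (m j).1)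

/-- The shear map `R_{j,ε}`: replaces `a_j` by `a_j + ε * b_j`, leaving all
other coordinates unchanged. -/
def shearR {g : ℕ} (j : Fin g) (ε : ℤ) (m : Fin g → ℤ × ℤ) : Fin g → ℤ × ℤ :=
  Function.update m j ((m j).1 + ε * (m j).2, (m j).2)

/-!
Fix `m ≠ 0` and a coordinate `j` with `(a_j, b_j) ≠ 0`. Choosing the sign `ε` to agree with that
of `a_j b_j`, one of the shears `S_{j,ε}`, `R_{j,ε}` moves `m` along an orbit on which the norm
grows exactly linearly: `|Tⁱ m| = |m| + i c` with `c ≥ 1`. As `f ∈ ℓ²`, `f` tends to `0` along this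
injective orbit, so `f m` is the telescoping sum of the differences `f (Tⁱ m) - f (Tⁱ⁺¹ m)`, and
the hypothesis with exponent `k + 2` bounds the `i`-th one by `C / (|m|^k (i + 1)²)`.
-/

open Filter Topology

theorem eventually_atTop_forall_le {ι β : Type*} [Preorder β] {x : ι → β}
    (h : ∃ C, ∀ i, x i ≤ C) : ∀ᶠ C in atTop, ∀ i, x i ≤ C :=
  let ⟨C, hC⟩ := h
  (eventually_ge_atTop C).mono fun _ hC' i => (hC i).trans hC'

section OrbitDecay

variable {α E : Type*} [NormedAddCommGroup E]

theorem tendsto_cofinite_zero_of_summable_norm_sq {f : α → E}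
    (hf : Summable fun a => ‖f a‖ ^ 2) : Tendsto f cofinite (𝓝 0) := by
  rw [tendsto_zero_iff_norm_tendsto_zero]
  simpa [Real.sqrt_sq (norm_nonneg _)] using hf.tendsto_cofinite_zero.sqrt

theorem summable_one_div_succ_sq : Summable fun i : ℕ => 1 / ((i : ℝ) + 1) ^ 2 := by
  simpa using (summable_nat_add_iff 1).2 (Real.summable_one_div_nat_pow.2 one_lt_two)

def LinearOrbitGrowth (N : α → ℝ) (T : α → α) (m : α) : Prop :=
  ∃ c : ℝ, 1 ≤ c ∧ ∀ i : ℕ, N (T^[i] m) = N m + i * c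

namespace LinearOrbitGrowth

variable {N : α → ℝ} {T : α → α} {m : α}

theorem injective (h : LinearOrbitGrowth N T m) : Function.Injective fun i : ℕ => T^[i] m := by
  obtain ⟨c, hc, hN⟩ := h
  have : StrictMono fun i : ℕ => N (T^[i] m) := fun i i' hii' => by
    simp only [hN]
    gcongr
  exact this.injective.of_comp

theorem pow_mul_le (h : LinearOrbitGrowth N T m) (hm : 1 ≤ N m) (k i : ℕ) :
    N m ^ k * ((i : ℝ) + 1) ^ 2 ≤ N (T^[i] m) ^ (k + 2) := by
  obtain ⟨c, hc, hN⟩ := h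
  have hi : (i : ℝ) ≤ i * c := le_mul_of_one_le_right i.cast_nonneg hc
  rw [pow_add, hN]
  apply mul_le_mul (pow_le_pow_left₀ (by linarith) (by linarith) k)
    (pow_le_pow_left₀ (by linarith) (by linarith) 2) (by positivity) (by positivity)

theorem pow_mul_norm_le {f : α → E} (h : LinearOrbitGrowth N T m)
    (hf : Tendsto f cofinite (𝓝 0)) (hm : 1 ≤ N m) {k : ℕ} {C : ℝ}
    (hC : ∀ x, N x ^ (k + 2) * ‖f x - f (T x)‖ ≤ C) :
    N m ^ k * ‖f m‖ ≤ (∑' i : ℕ, 1 / ((i : ℝ) + 1) ^ 2) * C := by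
  have hNk : 0 < N m ^ k := by positivity
  have hstep : ∀ i : ℕ, dist (f (T^[i] m)) (f (T^[i + 1] m)) ≤
      C / N m ^ k * (1 / ((i : ℝ) + 1) ^ 2) := fun i => by
    rw [dist_eq_norm, div_mul_div_comm, mul_one, le_div_iff₀ (by positivity), mul_comm,
      Function.iterate_succ_apply']
    exact (mul_le_mul_of_nonneg_right (h.pow_mul_le hm k i) (norm_nonneg _)).trans (hC _)
  have hlim : Tendsto (fun i : ℕ => f (T^[i] m)) atTop (𝓝 0) :=
    hf.comp (Nat.cofinite_eq_atTop ▸ h.injective.tendsto_cofinite)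
  have := dist_le_tsum_of_dist_le_of_tendsto₀ _ hstep (summable_one_div_succ_sq.mul_left _) hlim
  rw [tsum_mul_left, dist_zero_right, Function.iterate_zero_apply, div_mul_eq_mul_div,
    le_div_iff₀ hNk] at this
  linarith

end LinearOrbitGrowth

end OrbitDecay

section Shears

variable {g : ℕ}

theorem homNorm_update (m : Fin g → ℤ × ℤ) (j : Fin g) (p : ℤ × ℤ) :
    homNorm (Function.update m j p) = homNorm m - (|(m j).1| + |(m j).2|) + (|p.1| + |p.2|) := by
  let φ : ℤ × ℤ → ℤ := fun q => |q.1| + |q.2|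
  change ∑ i, (φ ∘ Function.update m j p) i = ∑ i, (φ ∘ m) i - φ (m j) + φ p
  rw [Function.comp_update, Finset.sum_update_of_mem (Finset.mem_univ j),
    Finset.sum_eq_add_sum_sdiff_singleton_of_mem (Finset.mem_univ j)]
  simp only [Function.comp_apply]
  ring

theorem one_le_homNorm {m : Fin g → ℤ × ℤ} {j : Fin g} (hj : m j ≠ 0) : 1 ≤ homNorm m := by
  have : 1 ≤ |(m j).1| + |(m j).2| := by
    by_contra! h
    exact hj (Prod.ext (abs_nonpos_iff.1 (by linarith [abs_nonneg (m j).2]))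
      (abs_nonpos_iff.1 (by linarith [abs_nonneg (m j).1])))
  exact this.trans (Finset.single_le_sum (f := fun i => |(m i).1| + |(m i).2|)
    (fun i _ => by positivity) (Finset.mem_univ j))

theorem abs_add_natCast_mul {x y : ℤ} (h : 0 ≤ x * y) (i : ℕ) :
    |x + i * y| = |x| + i * |y| := by
  rw [(abs_add_eq_add_abs_iff _ _).2 ?_, abs_mul, Nat.abs_cast]
  rcases mul_nonneg_iff.1 h with ⟨hx, hy⟩ | ⟨hx, hy⟩
  · exact .inl ⟨hx, by positivity⟩
  · exact .inr ⟨hx, mul_nonpos_of_nonneg_of_nonpos i.cast_nonneg hy⟩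

theorem shearS_iterate (j : Fin g) (ε : ℤ) (m : Fin g → ℤ × ℤ) (i : ℕ) :
    (shearS j ε)^[i] m = Function.update m j ((m j).1, (m j).2 + i * (ε * (m j).1)) := by
  induction i with
  | zero => simp
  | succ n ih =>
    rw [Function.iterate_succ_apply', ih, shearS]
    simp only [Function.update_self, Function.update_idem]
    congr 2
    push_cast
    ring

theorem shearR_iterate (j : Fin g) (ε : ℤ) (m : Fin g → ℤ × ℤ) (i : ℕ) :
    (shearR j ε)^[i] m = Function.update m j ((m j).1 + i * (ε * (m j).2), (m j).2) := by
  induction i with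
  | zero => simp
  | succ n ih =>
    rw [Function.iterate_succ_apply', ih, shearR]
    simp only [Function.update_self, Function.update_idem]
    congr 2
    push_cast
    ring

theorem linearOrbitGrowth_shearS {m : Fin g → ℤ × ℤ} {j : Fin g} {ε : ℤ}
    (hsign : 0 ≤ (m j).2 * (ε * (m j).1)) (hne : ε * (m j).1 ≠ 0) :
    LinearOrbitGrowth (fun m => (homNorm m : ℝ)) (shearS j ε) m := by
  refine ⟨|ε * (m j).1|, by exact_mod_cast Int.one_le_abs hne, fun i => ?_⟩
  have : homNorm ((shearS j ε)^[i] m) = homNorm m + i * |ε * (m j).1| := by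
    rw [shearS_iterate, homNorm_update, abs_add_natCast_mul hsign]
    ring
  simp only [this]
  push_cast
  ring

theorem linearOrbitGrowth_shearR {m : Fin g → ℤ × ℤ} {j : Fin g} {ε : ℤ}
    (hsign : 0 ≤ (m j).1 * (ε * (m j).2)) (hne : ε * (m j).2 ≠ 0) :
    LinearOrbitGrowth (fun m => (homNorm m : ℝ)) (shearR j ε) m := by
  refine ⟨|ε * (m j).2|, by exact_mod_cast Int.one_le_abs hne, fun i => ?_⟩
  have : homNorm ((shearR j ε)^[i] m) = homNorm m + i * |ε * (m j).2| := by
    rw [shearR_iterate, homNorm_update, abs_add_natCast_mul hsign]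
    ring
  simp only [this]
  push_cast
  ring

theorem exists_shear_linearOrbitGrowth {m : Fin g → ℤ × ℤ} {j : Fin g} (hj : m j ≠ 0) :
    ∃ ε : ℤ, (ε = 1 ∨ ε = -1) ∧
      (LinearOrbitGrowth (fun m => (homNorm m : ℝ)) (shearS j ε) m ∨
        LinearOrbitGrowth (fun m => (homNorm m : ℝ)) (shearR j ε) m) := by
  obtain ⟨ε, hε, hsign⟩ : ∃ ε : ℤ, (ε = 1 ∨ ε = -1) ∧ 0 ≤ ε * ((m j).1 * (m j).2) := by
    rcases le_total 0 ((m j).1 * (m j).2) with h | h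
    exacts [⟨1, .inl rfl, by linarith⟩, ⟨-1, .inr rfl, by linarith⟩]
  have hε0 : ε ≠ 0 := by rcases hε with rfl | rfl <;> decide
  refine ⟨ε, hε, ?_⟩
  by_cases ha : (m j).1 = 0
  · have hb : (m j).2 ≠ 0 := fun hb => hj (Prod.ext ha hb)
    exact .inr (linearOrbitGrowth_shearR (by linarith) (mul_ne_zero hε0 hb))
  · exact .inl (linearOrbitGrowth_shearS (by linarith) (mul_ne_zero hε0 ha))

end Shears

theorem rapid_decay_of_shear_differences_general
    (g : ℕ) (f : (Fin g → ℤ × ℤ) → ℂ)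
    (hf : Summable fun m : Fin g → ℤ × ℤ => ‖f m‖ ^ 2)
    (hS : ∀ (j : Fin g) (ε : ℤ), (ε = 1 ∨ ε = -1) → ∀ k : ℕ, ∃ C : ℝ,
      ∀ m : Fin g → ℤ × ℤ,
        (homNorm m : ℝ) ^ k * ‖f m - f (shearS j ε m)‖ ≤ C)
    (hR : ∀ (j : Fin g) (ε : ℤ), (ε = 1 ∨ ε = -1) → ∀ k : ℕ, ∃ C : ℝ,
      ∀ m : Fin g → ℤ × ℤ,
        (homNorm m : ℝ) ^ k * ‖f m - f (shearR j ε m)‖ ≤ C) :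
    ∀ k : ℕ, ∃ F : ℝ, ∀ m : Fin g → ℤ × ℤ, m ≠ 0 →
      (homNorm m : ℝ) ^ k * ‖f m‖ ≤ F := by
  intro k
  have hbound (j : Fin g) (ε : ℤ) (hε : ε = 1 ∨ ε = -1) : ∀ᶠ C in atTop,
      (∀ m, (homNorm m : ℝ) ^ (k + 2) * ‖f m - f (shearS j ε m)‖ ≤ C) ∧
      (∀ m, (homNorm m : ℝ) ^ (k + 2) * ‖f m - f (shearR j ε m)‖ ≤ C) :=
    (eventually_atTop_forall_le (hS j ε hε _)).and (eventually_atTop_forall_le (hR j ε hε _))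
  -- `ε ∈ ({1, -1} : Set ℤ)` unfolds to `ε = 1 ∨ ε = -1`
  obtain ⟨C, hC⟩ := (eventually_all.2 fun j =>
    (eventually_all_finite (Set.toFinite {1, -1})).2 (hbound j)).exists
  refine ⟨(∑' i : ℕ, 1 / ((i : ℝ) + 1) ^ 2) * C, fun m hm => ?_⟩
  obtain ⟨j, hj⟩ := Function.ne_iff.mp hm
  have hf0 := tendsto_cofinite_zero_of_summable_norm_sq hf
  have hm1 : (1 : ℝ) ≤ homNorm m := by exact_mod_cast one_le_homNorm hj
  obtain ⟨ε, hε, hgrowth | hgrowth⟩ := exists_shear_linearOrbitGrowth hj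
  · exact hgrowth.pow_mul_norm_le hf0 hm1 (hC j ε hε).1
  · exact hgrowth.pow_mul_norm_le hf0 hm1 (hC j ε hε).2

/-- Fix `g ≥ 1` and let `f : ℤ^{2g} → ℂ` be square-summable.
Suppose that for each of the `4g` shear maps `T` and every `k ∈ ℕ` there is a
constant `C` with `|m|^k ⬝ |f(m) − f(T(m))| ≤ C` for all `m`.  Then `f` is
rapidly decreasing away from zero: for every `k ∈ ℕ` there is `F_k` with
`|m|^k ⬝ |f(m)| ≤ F_k` for all nonzero `m`. -/
theorem rapid_decay_of_shear_differences
    (g : ℕ) (hg : 1 ≤ g) (f : (Fin g → ℤ × ℤ) → ℂ)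
    (hf : Summable fun m : Fin g → ℤ × ℤ => ‖f m‖ ^ 2)
    (hS : ∀ (j : Fin g) (ε : ℤ), (ε = 1 ∨ ε = -1) → ∀ k : ℕ, ∃ C : ℝ,
      ∀ m : Fin g → ℤ × ℤ,
        (homNorm m : ℝ) ^ k * ‖f m - f (shearS j ε m)‖ ≤ C)
    (hR : ∀ (j : Fin g) (ε : ℤ), (ε = 1 ∨ ε = -1) → ∀ k : ℕ, ∃ C : ℝ,
      ∀ m : Fin g → ℤ × ℤ,
        (homNorm m : ℝ) ^ k * ‖f m - f (shearR j ε m)‖ ≤ C) :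
    ∀ k : ℕ, ∃ F : ℝ, ∀ m : Fin g → ℤ × ℤ, m ≠ 0 →
      (homNorm m : ℝ) ^ k * ‖f m‖ ≤ F :=
  rapid_decay_of_shear_differences_general g f hf hS hR
end
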